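/- Let $X$ be a Banach space, $\omega < 0$, $0 < \lambda$ with $1-\lambda\omega > 0$, and $K_0 > 0$. Let $\psi, \phi \in BUC(\mathbb{R},X)$ and suppose $v, w \in BUC(\mathbb{R},X)$ satisfy, for all $t$: $\|v(t)-w(t)\| \leq \frac{1}{\lambda(1-\lambda\omega)}\int_0^\infty e^{-\tau/\lambda}\|v(t-\tau)-w(t-\tau)\|\,d\tau + \frac{\lambda K_0}{1-\lambda\omega}\sup_{x\leq t}\|\psi(x)-\phi(x)\|$. Then for all $t$: $\|v(t)-w(t)\| \leq \frac{\lambda K_0}{1-\lambda\omega}\sup_{x\leq t}\|\psi(x)-\phi(x)\| + \frac{K_0}{1-\lambda\omega}\int_0^\infty \exp\left(\frac{\omega\tau}{1-\lambda\omega}\right)\sup_{x\leq t-\tau}\|\psi(x)-\phi(x)\|\,d\tau$. -/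

import Mathlib

/-!
Write `E_β f (t) = ∫₀^∞ e^{-βτ} f (t - τ) dτ` (`expConv`), and put `β = 1/λ`,
`δ = -ω/(1 - λω)`, `C = K₀/(1 - λω)`, `u = ‖v - w‖`, `g (t) = sup_{x ≤ t} ‖ψ x - φ x‖`.
Then `β - δ = 1/(λ(1 - λω))`, the hypothesis says `u ≤ (β - δ) E_β u + (C/β) g`, and the claim
is `u ≤ B := (C/β) g + C E_δ g`.

Since `(β - δ) E_β` is a positive operator of norm `(β - δ)/β < 1` on bounded functions, a
bounded subsolution of `u = (β - δ) E_β u + h` lies below every bounded supersolution (look at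
the supremum of their difference). `B` is a supersolution by the resolvent identity
`E_β E_δ = (E_δ - E_β)/(β - δ)`, which is Fubini on the triangle `0 < τ < ρ`, and `g ≥ 0`.
-/

open MeasureTheory Set

theorem integral_Ioi_integral_Ioi_eq_integral_Ioi_integral_Ioo {E : Type*} [NormedAddCommGroup E]
    [NormedSpace ℝ E] {f : ℝ → ℝ → E}
    (hf : IntegrableOn (Function.uncurry f) (Ioi 0 ×ˢ Ioi 0) (volume.prod volume)) :
    ∫ τ in Ioi 0, ∫ σ in Ioi 0, f τ σ = ∫ ρ in Ioi 0, ∫ τ in Ioo 0 ρ, f τ (ρ - τ) := by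
  set K := (Ioi (0:ℝ) ×ˢ Ioi (0:ℝ)).indicator (Function.uncurry f)
  have hshear := measurePreserving_prod_sub (volume : Measure ℝ) (volume : Measure ℝ)
  have hemb := (MeasurableEquiv.shearSubRight ℝ).measurableEmbedding
  have hK : Integrable K (volume.prod volume) :=
    (integrable_indicator_iff (measurableSet_Ioi.prod measurableSet_Ioi)).2 hf
  have hslice : ∀ ρ τ : ℝ, K (τ, ρ - τ) = (Ioo 0 ρ).indicator (fun τ => f τ (ρ - τ)) τ := by
    intro ρ τ
    simp only [K, indicator_apply, mem_prod, mem_Ioi, mem_Ioo, sub_pos, Function.uncurry_apply_pair]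
  calc ∫ τ in Ioi 0, ∫ σ in Ioi 0, f τ σ = ∫ z, K z ∂(volume.prod volume) := by
        rw [integral_indicator (measurableSet_Ioi.prod measurableSet_Ioi), setIntegral_prod _ hf]
        rfl
    _ = ∫ z, K (z.1, z.2 - z.1) ∂(volume.prod volume) := (hshear.integral_comp hemb K).symm
    _ = ∫ ρ, ∫ τ, K (τ, ρ - τ) := integral_prod_symm _ ((hshear.integrable_comp_emb hemb).2 hK)
    _ = ∫ ρ, ∫ τ in Ioo 0 ρ, f τ (ρ - τ) := by
        simp_rw [hslice, integral_indicator measurableSet_Ioo]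
    _ = ∫ ρ in Ioi 0, ∫ τ in Ioo 0 ρ, f τ (ρ - τ) := by
        refine (setIntegral_eq_integral_of_forall_compl_eq_zero fun ρ hρ => ?_).symm
        rw [Ioo_eq_empty (by simpa using hρ), Measure.restrict_empty, integral_zero_measure]

theorem integral_Ioo_exp_neg_mul {a ρ : ℝ} (ha : a ≠ 0) (hρ : 0 ≤ ρ) :
    ∫ τ in Ioo 0 ρ, Real.exp (-a * τ) = (1 - Real.exp (-a * ρ)) / a := by
  rw [← integral_Ioc_eq_integral_Ioo, ← intervalIntegral.integral_of_le hρ,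
    intervalIntegral.integral_comp_mul_left (fun x => Real.exp x) (neg_ne_zero.2 ha),
    integral_exp, mul_zero, Real.exp_zero, smul_eq_mul]
  field_simp
  ring

theorem abs_const_mul_le_of_abs_le {c a M : ℝ} (h : |a| ≤ M) : |c * a| ≤ |c| * M :=
  (abs_mul c a).trans_le (mul_le_mul_of_nonneg_left h (abs_nonneg c))

noncomputable def expConv (β : ℝ) (f : ℝ → ℝ) (t : ℝ) : ℝ :=
  ∫ τ in Ioi 0, Real.exp (-β * τ) * f (t - τ)

section expConv

variable {β δ M : ℝ} {f g : ℝ → ℝ}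

theorem integrableOn_exp_neg_mul_mul_comp_sub (hβ : 0 < β) (hf : Measurable f)
    (hfM : ∀ x, |f x| ≤ M) (t : ℝ) :
    IntegrableOn (fun τ => Real.exp (-β * τ) * f (t - τ)) (Ioi 0) :=
  (exp_neg_integrableOn_Ioi 0 hβ).mul_bdd
    (hf.comp (measurable_const.sub measurable_id)).aestronglyMeasurable
    (ae_of_all _ fun _ => hfM _)

theorem measurable_expConv (hf : Measurable f) : Measurable (expConv β f) := by
  refine (StronglyMeasurable.integral_prod_right (ν := volume.restrict (Ioi 0))
    (f := fun t τ : ℝ => Real.exp (-β * τ) * f (t - τ)) ?_).measurable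
  exact ((Real.measurable_exp.comp (measurable_snd.const_mul _)).mul
    (hf.comp (measurable_fst.sub measurable_snd))).stronglyMeasurable

theorem expConv_const (hβ : 0 < β) (c t : ℝ) : expConv β (fun _ => c) t = c / β := by
  rw [expConv, integral_mul_const, integral_exp_mul_Ioi (neg_neg_iff_pos.2 hβ)]
  field_simp
  simp

theorem expConv_const_mul (c : ℝ) (f : ℝ → ℝ) (t : ℝ) :
    expConv β (fun s => c * f s) t = c * expConv β f t := by
  rw [expConv, expConv, ← integral_const_mul]
  simp_rw [mul_left_comm c]

theorem expConv_add {t : ℝ} (hf : IntegrableOn (fun τ => Real.exp (-β * τ) * f (t - τ)) (Ioi 0))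
    (hg : IntegrableOn (fun τ => Real.exp (-β * τ) * g (t - τ)) (Ioi 0)) :
    expConv β (fun s => f s + g s) t = expConv β f t + expConv β g t := by
  rw [expConv, expConv, expConv, ← integral_add hf hg]
  simp_rw [mul_add]

theorem expConv_sub {t : ℝ} (hf : IntegrableOn (fun τ => Real.exp (-β * τ) * f (t - τ)) (Ioi 0))
    (hg : IntegrableOn (fun τ => Real.exp (-β * τ) * g (t - τ)) (Ioi 0)) :
    expConv β (fun s => f s - g s) t = expConv β f t - expConv β g t := by
  rw [expConv, expConv, expConv, ← integral_sub hf hg]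
  simp_rw [mul_sub]

theorem expConv_mono {t : ℝ} (hf : IntegrableOn (fun τ => Real.exp (-β * τ) * f (t - τ)) (Ioi 0))
    (hg : IntegrableOn (fun τ => Real.exp (-β * τ) * g (t - τ)) (Ioi 0)) (hfg : ∀ x, f x ≤ g x) :
    expConv β f t ≤ expConv β g t :=
  setIntegral_mono hf hg fun _ => mul_le_mul_of_nonneg_left (hfg _) (Real.exp_pos _).le

theorem expConv_nonneg (hf : ∀ x, 0 ≤ f x) (t : ℝ) : 0 ≤ expConv β f t :=
  setIntegral_nonneg measurableSet_Ioi fun _ _ => mul_nonneg (Real.exp_pos _).le (hf _)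

theorem abs_expConv_le (hβ : 0 < β) (hfM : ∀ x, |f x| ≤ M) (t : ℝ) :
    |expConv β f t| ≤ M / β := by
  rw [← Real.norm_eq_abs, ← expConv_const hβ M t]
  unfold expConv
  refine norm_integral_le_of_norm_le ((exp_neg_integrableOn_Ioi 0 hβ).mul_const M)
    (ae_of_all _ fun _ => ?_)
  rw [norm_mul, Real.norm_of_nonneg (Real.exp_pos _).le]
  exact mul_le_mul_of_nonneg_left (hfM _) (Real.exp_pos _).le

theorem expConv_expConv (hδ : 0 < δ) (hδβ : δ < β) (hg : Measurable g) (hgM : ∀ x, |g x| ≤ M)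
    (t : ℝ) : expConv β (expConv δ g) t = (expConv δ g t - expConv β g t) / (β - δ) := by
  have hβ : 0 < β := hδ.trans hδβ
  have hβδ : β - δ ≠ 0 := (sub_pos.2 hδβ).ne'
  have hint : IntegrableOn (Function.uncurry fun τ σ =>
      Real.exp (-β * τ) * (Real.exp (-δ * σ) * g (t - τ - σ))) (Ioi 0 ×ˢ Ioi 0)
      (volume.prod volume) := by
    rw [IntegrableOn, ← Measure.prod_restrict]
    refine ((exp_neg_integrableOn_Ioi 0 hβ).mul_prod
      ((exp_neg_integrableOn_Ioi 0 hδ).const_mul M)).mono' ?_ (ae_of_all _ fun z => ?_)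
    · exact ((Real.measurable_exp.comp (measurable_fst.const_mul _)).mul
        ((Real.measurable_exp.comp (measurable_snd.const_mul _)).mul
        (hg.comp ((measurable_const.sub measurable_fst).sub measurable_snd)))).aestronglyMeasurable
    · rw [Function.uncurry_def, norm_mul, norm_mul, Real.norm_of_nonneg (Real.exp_pos _).le,
        Real.norm_of_nonneg (Real.exp_pos _).le, mul_comm M]
      gcongr
      exact hgM _
  have hinner : ∀ ρ ∈ Ioi (0:ℝ), ∫ τ in Ioo 0 ρ,
      Real.exp (-β * τ) * (Real.exp (-δ * (ρ - τ)) * g (t - τ - (ρ - τ)))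
      = (Real.exp (-δ * ρ) - Real.exp (-β * ρ)) / (β - δ) * g (t - ρ) := by
    intro ρ hρ
    have hsplit : ∀ τ, Real.exp (-β * τ) * Real.exp (-δ * (ρ - τ))
        = Real.exp (-δ * ρ) * Real.exp (-(β - δ) * τ) := fun τ => by
      rw [← Real.exp_add, ← Real.exp_add]; ring_nf
    simp_rw [sub_sub_sub_cancel_right, ← mul_assoc, hsplit, mul_right_comm _ _ (g (t - ρ)),
      integral_const_mul, integral_Ioo_exp_neg_mul hβδ (le_of_lt hρ)]
    have hβρ : Real.exp (-δ * ρ) * Real.exp (-(β - δ) * ρ) = Real.exp (-β * ρ) := by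
      rw [← Real.exp_add]; ring_nf
    rw [← hβρ]
    ring
  calc expConv β (expConv δ g) t
      = ∫ τ in Ioi 0, ∫ σ in Ioi 0, Real.exp (-β * τ) * (Real.exp (-δ * σ) * g (t - τ - σ)) := by
        simp_rw [expConv, ← integral_const_mul]
    _ = ∫ ρ in Ioi 0, ∫ τ in Ioo 0 ρ,
          Real.exp (-β * τ) * (Real.exp (-δ * (ρ - τ)) * g (t - τ - (ρ - τ))) :=
        integral_Ioi_integral_Ioi_eq_integral_Ioi_integral_Ioo hint
    _ = ∫ ρ in Ioi 0, (Real.exp (-δ * ρ) - Real.exp (-β * ρ)) / (β - δ) * g (t - ρ) :=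
        setIntegral_congr_fun measurableSet_Ioi hinner
    _ = (expConv δ g t - expConv β g t) / (β - δ) := by
        rw [expConv, expConv, ← integral_sub (integrableOn_exp_neg_mul_mul_comp_sub hδ hg hgM t)
          (integrableOn_exp_neg_mul_mul_comp_sub hβ hg hgM t), ← integral_div]
        congr 1
        funext ρ
        ring

theorem nonpos_of_le_mul_expConv {α : ℝ} {d : ℝ → ℝ} (hα : 0 ≤ α) (hαβ : α < β)
    (hd : Measurable d) (hdM : ∀ x, |d x| ≤ M) (hle : ∀ t, d t ≤ α * expConv β d t) (t : ℝ) :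
    d t ≤ 0 := by
  have hβ : 0 < β := hα.trans_lt hαβ
  have hbdd : BddAbove (range d) := ⟨M, by rintro _ ⟨x, rfl⟩; exact (abs_le.1 (hdM x)).2⟩
  set A := ⨆ s, d s
  have hA : A ≤ α * (A / β) := ciSup_le fun s => (hle s).trans <| by
    rw [← expConv_const hβ A s]
    refine mul_le_mul_of_nonneg_left (expConv_mono ?_ ?_ fun x => le_ciSup hbdd x) hα
    · exact integrableOn_exp_neg_mul_mul_comp_sub hβ hd hdM s
    · exact integrableOn_exp_neg_mul_mul_comp_sub hβ measurable_const (fun _ => le_rfl) s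
  rw [← mul_div_assoc, le_div_iff₀ hβ] at hA
  exact (le_ciSup hbdd t).trans (by nlinarith)

theorem le_of_le_mul_expConv_add_of_mul_expConv_add_le {α N : ℝ} {u B h : ℝ → ℝ} (hα : 0 ≤ α)
    (hαβ : α < β) (hu : Measurable u) (huM : ∀ x, |u x| ≤ M) (hB : Measurable B)
    (hBN : ∀ x, |B x| ≤ N) (hsub : ∀ t, u t ≤ α * expConv β u t + h t)
    (hsuper : ∀ t, α * expConv β B t + h t ≤ B t) (t : ℝ) : u t ≤ B t := by
  have hβ : 0 < β := hα.trans_lt hαβ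
  have hd := nonpos_of_le_mul_expConv (d := fun s => u s - B s) hα hαβ (hu.sub hB)
    (fun x => (abs_sub _ _).trans (add_le_add (huM x) (hBN x))) (fun s => ?_) t
  · exact sub_nonpos.1 hd
  · rw [expConv_sub (integrableOn_exp_neg_mul_mul_comp_sub hβ hu huM s)
      (integrableOn_exp_neg_mul_mul_comp_sub hβ hB hBN s), mul_sub]
    linarith [hsub s, hsuper s]

theorem sub_mul_expConv_add_le (hδ : 0 < δ) (hδβ : δ < β) (hg : Measurable g) (hg0 : ∀ x, 0 ≤ g x)
    (hgM : ∀ x, |g x| ≤ M) {C : ℝ} (hC : 0 ≤ C) (t : ℝ) :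
    (β - δ) * expConv β (fun s => C / β * g s + C * expConv δ g s) t + C / β * g t
      ≤ C / β * g t + C * expConv δ g t := by
  have hβ : 0 < β := hδ.trans hδβ
  have hint₁ := integrableOn_exp_neg_mul_mul_comp_sub hβ (hg.const_mul (C / β))
    (fun x => abs_const_mul_le_of_abs_le (hgM x)) t
  have hint₂ := integrableOn_exp_neg_mul_mul_comp_sub hβ ((measurable_expConv hg).const_mul C)
    (fun x => abs_const_mul_le_of_abs_le (abs_expConv_le hδ hgM x)) t
  rw [expConv_add hint₁ hint₂, expConv_const_mul, expConv_const_mul,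
    expConv_expConv hδ hδβ hg hgM]
  have hβδ : β - δ ≠ 0 := (sub_pos.2 hδβ).ne'
  have hrem : 0 ≤ δ * C / β * expConv β g t := by
    have := expConv_nonneg hg0 t (β := β)
    positivity
  calc (β - δ) * (C / β * expConv β g t + C * ((expConv δ g t - expConv β g t) / (β - δ)))
        + C / β * g t
      = C / β * g t + C * expConv δ g t - δ * C / β * expConv β g t := by
        field_simp
        ring
    _ ≤ C / β * g t + C * expConv δ g t := sub_le_self _ hrem

theorem le_div_mul_add_mul_expConv (hδ : 0 < δ) (hδβ : δ < β) (hg : Measurable g)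
    (hg0 : ∀ x, 0 ≤ g x) (hgM : ∀ x, |g x| ≤ M) {C N : ℝ} (hC : 0 ≤ C) {u : ℝ → ℝ}
    (hu : Measurable u) (huN : ∀ x, |u x| ≤ N)
    (hsub : ∀ t, u t ≤ (β - δ) * expConv β u t + C / β * g t) (t : ℝ) :
    u t ≤ C / β * g t + C * expConv δ g t :=
  le_of_le_mul_expConv_add_of_mul_expConv_add_le (sub_nonneg.2 hδβ.le) (sub_lt_self _ hδ) hu huN
    ((hg.const_mul _).add ((measurable_expConv hg).const_mul _))
    (fun x => (abs_add_le _ _).trans (add_le_add (abs_const_mul_le_of_abs_le (hgM x))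
      (abs_const_mul_le_of_abs_le (abs_expConv_le hδ hgM x))))
    hsub (sub_mul_expConv_add_le hδ hδβ hg hg0 hgM hC) t

end expConv

section runningSup

variable {ι : Type*} [Preorder ι] {h : ι → ℝ} {M : ℝ}

theorem bddAbove_range_subtype_le (hM : ∀ x, h x ≤ M) (s : ι) :
    BddAbove (range fun x : {x // x ≤ s} => h x.1) :=
  ⟨M, by rintro _ ⟨x, rfl⟩; exact hM x⟩

theorem le_ciSup_subtype_le (hM : ∀ x, h x ≤ M) (s : ι) : h s ≤ ⨆ x : {x // x ≤ s}, h x.1 :=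
  le_ciSup (f := fun x : {x // x ≤ s} => h x.1) (bddAbove_range_subtype_le hM s) ⟨s, le_rfl⟩

theorem abs_ciSup_subtype_le_le (h0 : ∀ x, 0 ≤ h x) (hM : ∀ x, h x ≤ M) (s : ι) :
    |⨆ x : {x // x ≤ s}, h x.1| ≤ M :=
  haveI : Nonempty {x // x ≤ s} := ⟨⟨s, le_rfl⟩⟩
  abs_le.2 ⟨(neg_nonpos.2 ((h0 s).trans (hM s))).trans ((h0 s).trans (le_ciSup_subtype_le hM s)),
    ciSup_le fun x => hM x.1⟩

theorem monotone_ciSup_subtype_le (hM : ∀ x, h x ≤ M) :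
    Monotone fun s : ι => ⨆ x : {x // x ≤ s}, h x.1 := fun s s' hss' =>
  haveI : Nonempty {x // x ≤ s} := ⟨⟨s, le_rfl⟩⟩
  ciSup_le fun x => le_ciSup (f := fun x : {x // x ≤ s'} => h x.1)
    (bddAbove_range_subtype_le hM s') ⟨x, x.2.trans hss'⟩

end runningSup

theorem stmt16_general (X : Type*) [NormedAddCommGroup X]
    (ω lam K₀ : ℝ) (hω : ω < 0) (hlam : 0 < lam) (hpos : 0 < 1 - lam * ω) (hK₀ : 0 < K₀)
    (ψ φ v w : ℝ → X)
    (hψ : UniformContinuous ψ ∧ ∃ C, ∀ t, ‖ψ t‖ ≤ C)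
    (hφ : UniformContinuous φ ∧ ∃ C, ∀ t, ‖φ t‖ ≤ C)
    (hv : UniformContinuous v ∧ ∃ C, ∀ t, ‖v t‖ ≤ C)
    (hw : UniformContinuous w ∧ ∃ C, ∀ t, ‖w t‖ ≤ C)
    (hineq : ∀ t : ℝ, ‖v t - w t‖
        ≤ (1 / (lam * (1 - lam * ω))) *
            (∫ τ in Ioi (0:ℝ), Real.exp (-τ / lam) * ‖v (t - τ) - w (t - τ)‖)
          + (lam * K₀ / (1 - lam * ω)) * ⨆ x : {x : ℝ // x ≤ t}, ‖ψ x.1 - φ x.1‖) :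
    ∀ t : ℝ, ‖v t - w t‖
        ≤ (lam * K₀ / (1 - lam * ω)) * (⨆ x : {x : ℝ // x ≤ t}, ‖ψ x.1 - φ x.1‖)
          + (K₀ / (1 - lam * ω)) *
            ∫ τ in Ioi (0:ℝ), Real.exp (ω * τ / (1 - lam * ω)) *
              ⨆ x : {x : ℝ // x ≤ t - τ}, ‖ψ x.1 - φ x.1‖ := by
  obtain ⟨-, Cψ, hψC⟩ := hψ
  obtain ⟨-, Cφ, hφC⟩ := hφ
  obtain ⟨hvc, Cv, hvC⟩ := hv
  obtain ⟨hwc, Cw, hwC⟩ := hw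
  have hψφ : ∀ x, ‖ψ x - φ x‖ ≤ Cψ + Cφ :=
    fun x => (norm_sub_le _ _).trans (add_le_add (hψC x) (hφC x))
  have hg0 : ∀ s, 0 ≤ ⨆ x : {x : ℝ // x ≤ s}, ‖ψ x.1 - φ x.1‖ :=
    fun s => (norm_nonneg _).trans (le_ciSup_subtype_le hψφ s)
  have huN : ∀ s, |‖v s - w s‖| ≤ Cv + Cw := fun s => by
    rw [abs_norm]; exact (norm_sub_le _ _).trans (add_le_add (hvC s) (hwC s))
  have hδ : 0 < -ω / (1 - lam * ω) := div_pos (neg_pos.2 hω) hpos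
  have hδβ : -ω / (1 - lam * ω) < lam⁻¹ := by
    rw [div_lt_iff₀ hpos]; field_simp; linarith
  have hrate : 1 / (lam * (1 - lam * ω)) = lam⁻¹ - -ω / (1 - lam * ω) := by field_simp; ring
  have hcoef : lam * K₀ / (1 - lam * ω) = K₀ / (1 - lam * ω) / lam⁻¹ := by field_simp
  have hkernel : ∀ τ, -τ / lam = -lam⁻¹ * τ := fun τ => by ring
  have hkernel' : ∀ τ, ω * τ / (1 - lam * ω) = -(-ω / (1 - lam * ω)) * τ := fun τ => by ring
  intro t
  have key := le_div_mul_add_mul_expConv hδ hδβ (monotone_ciSup_subtype_le hψφ).measurable hg0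
    (abs_ciSup_subtype_le_le (fun _ => norm_nonneg _) hψφ)
    (div_pos hK₀ hpos).le (hvc.continuous.sub hwc.continuous).norm.measurable huN
    (fun s => by simpa only [hrate, hcoef, hkernel, expConv, Pi.sub_apply] using hineq s) t
  simpa only [hcoef, hkernel', expConv, Pi.sub_apply] using key

theorem stmt16 (X : Type*) [NormedAddCommGroup X] [NormedSpace ℝ X] [CompleteSpace X]
    (ω lam K₀ : ℝ) (hω : ω < 0) (hlam : 0 < lam) (hpos : 0 < 1 - lam * ω) (hK₀ : 0 < K₀)
    (ψ φ v w : ℝ → X)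
    (hψ : UniformContinuous ψ ∧ ∃ C, ∀ t, ‖ψ t‖ ≤ C)
    (hφ : UniformContinuous φ ∧ ∃ C, ∀ t, ‖φ t‖ ≤ C)
    (hv : UniformContinuous v ∧ ∃ C, ∀ t, ‖v t‖ ≤ C)
    (hw : UniformContinuous w ∧ ∃ C, ∀ t, ‖w t‖ ≤ C)
    (hineq : ∀ t : ℝ, ‖v t - w t‖
        ≤ (1 / (lam * (1 - lam * ω))) *
            (∫ τ in Ioi (0:ℝ), Real.exp (-τ / lam) * ‖v (t - τ) - w (t - τ)‖)
          + (lam * K₀ / (1 - lam * ω)) * ⨆ x : {x : ℝ // x ≤ t}, ‖ψ x.1 - φ x.1‖) :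
    ∀ t : ℝ, ‖v t - w t‖
        ≤ (lam * K₀ / (1 - lam * ω)) * (⨆ x : {x : ℝ // x ≤ t}, ‖ψ x.1 - φ x.1‖)
          + (K₀ / (1 - lam * ω)) *
            ∫ τ in Ioi (0:ℝ), Real.exp (ω * τ / (1 - lam * ω)) *
              ⨆ x : {x : ℝ // x ≤ t - τ}, ‖ψ x.1 - φ x.1‖ :=
  stmt16_general X ω lam K₀ hω hlam hpos hK₀ ψ φ v w hψ hφ hv hw hineq
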